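/- arXiv:2506.05619 — 10 statements merged into one kernel-verified Lean document; each statement's English description precedes it below -/
import Mathlib

section
/- Let σ be a profile over rankings of M alternatives with induced preference function P^σ, and for r ∈ ℝ^M define the Bradley–Terry log-likelihood L(r) := Σ_{i<j} [ P^σ(y_i ≻ y_j)·log(e^{r_i}/(e^{r_i}+e^{r_j})) + P^σ(y_j ≻ y_i)·log(e^{r_j}/(e^{r_i}+e^{r_j})) ]. If r* ∈ ℝ^M is a global maximizer of L, then for all i, j ∈ {1,…,M}: r*_i > r*_j if and only if B(y_i) > B(y_j). -/
open Finset

noncomputable section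

/-- A profile: a probability distribution over rankings (permutations of `Fin M`,
where `r i` is the 0-indexed position of alternative `i`, smaller is better). -/
def IsProfile (M : ℕ) (σ : Equiv.Perm (Fin M) → ℝ) : Prop :=
  (∀ r, 0 ≤ σ r) ∧ ∑ r : Equiv.Perm (Fin M), σ r = 1

/-- Induced preference function `P^σ(y_i ≻ y_j)`. -/
def Pref (M : ℕ) (σ : Equiv.Perm (Fin M) → ℝ) (i j : Fin M) : ℝ :=
  ∑ r : Equiv.Perm (Fin M), σ r * (if r i < r j then (1 : ℝ) else 0)

/-- Top-choice share `w^σ_i`. -/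
def topShare (M : ℕ) (σ : Equiv.Perm (Fin M) → ℝ) (i : Fin M) : ℝ :=
  ∑ r : Equiv.Perm (Fin M), (if (r i : ℕ) = 0 then σ r else 0)

/-- Borda score `B(y_i) = Σ_r σ_r (M − r(y_i))` (with 1-indexed ranks; here ranks
are 0-indexed, so the weight is `M − 1 − r i`). -/
def Borda (M : ℕ) (σ : Equiv.Perm (Fin M) → ℝ) (i : Fin M) : ℝ :=
  ∑ r : Equiv.Perm (Fin M), σ r * ((M : ℝ) - 1 - ((r i : ℕ) : ℝ))

/-- `u_i := min_{j ≠ i} P^σ(y_i ≻ y_j)`. -/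
def minPref (M : ℕ) (σ : Equiv.Perm (Fin M) → ℝ) (i : Fin M) : ℝ :=
  sInf {x : ℝ | ∃ j, j ≠ i ∧ x = Pref M σ i j}

/-- The policy `Φ*(σ)(y_i) := u_i / Σ_j u_j`. -/
def PhiStar (M : ℕ) (σ : Equiv.Perm (Fin M) → ℝ) (i : Fin M) : ℝ :=
  minPref M σ i / ∑ j : Fin M, minPref M σ j

/-! At a maximizer `r` the partial derivative of the log-likelihood in `r i` vanishes. Using
`P(y_i ≻ y_k) + P(y_k ≻ y_i) = 1` this reads `Σ_k P(y_i ≻ y_k) = Σ_k sigmoid (r i - r k) - 1/2`.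
The left side is the Borda score of `y_i`, and the right side is strictly increasing in `r i`. -/

open Real

namespace Real

lemma hasDerivAt_log_sigmoid (x : ℝ) :
    HasDerivAt (fun x => log (sigmoid x)) (1 - sigmoid x) x := by
  convert (hasDerivAt_sigmoid x).log (sigmoid_pos x).ne' using 1
  field_simp [(sigmoid_pos x).ne']

lemma exp_div_exp_add_exp (x y : ℝ) : exp x / (exp x + exp y) = sigmoid (x - y) := by
  rw [sigmoid_def, neg_sub, exp_sub]
  field_simp

end Real

lemma Finset.sum_sum_ite_lt_add_sum_diag {ι β : Type*} [Fintype ι] [LinearOrder ι]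
    [AddCommMonoid β] (f : ι → ι → β) :
    ∑ i, ∑ j, (if i < j then f i j + f j i else 0) + ∑ i, f i i = ∑ i, ∑ j, f i j := by
  have hsplit : ∀ i j, f i j =
      (if i < j then f i j else 0) + (if j < i then f i j else 0) + (if i = j then f i j else 0) := by
    intro i j
    rcases lt_trichotomy i j with h | rfl | h
    · simp [h, h.ne, h.not_gt]
    · simp
    · simp [h, h.ne', h.not_gt]
  conv_rhs => rw [sum_congr rfl fun i _ => sum_congr rfl fun j _ => hsplit i j]
  simp only [sum_add_distrib, ite_add_zero, sum_ite_eq, mem_univ, if_true]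
  rw [sum_comm (f := fun i j => if j < i then f i j else 0)]

namespace BradleyTerry

variable {ι : Type*} [Fintype ι]

def logLik (w : ι → ι → ℝ) (v : ι → ℝ) : ℝ :=
  ∑ a, ∑ b, w a b * log (sigmoid (v a - v b))

lemma hasDerivAt_logLik_add_smul (w : ι → ι → ℝ) (v d : ι → ℝ) :
    HasDerivAt (fun t : ℝ => logLik w (v + t • d))
      (∑ a, ∑ b, w a b * (1 - sigmoid (v a - v b)) * (d a - d b)) 0 := by
  refine HasDerivAt.fun_sum fun a _ => HasDerivAt.fun_sum fun b _ => ?_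
  have hcoord : ∀ c, HasDerivAt (fun t : ℝ => (v + t • d) c) (d c) 0 := fun c => by
    simpa using ((hasDerivAt_id (0 : ℝ)).mul_const (d c)).const_add (v c)
  have hlin := (hcoord a).fun_sub (hcoord b)
  have := ((hasDerivAt_log_sigmoid (v a - v b)).comp_of_eq 0 hlin (by simp)).const_mul (w a b)
  simpa only [Function.comp_def, mul_assoc] using this

lemma sum_sub_eq_zero_of_forall_logLik_le [DecidableEq ι] {w : ι → ι → ℝ} {v : ι → ℝ}
    (hmax : ∀ u, logLik w u ≤ logLik w v) (i : ι) :
    ∑ k, (w i k * (1 - sigmoid (v i - v k)) - w k i * (1 - sigmoid (v k - v i))) = 0 := by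
  have hdir : ∑ a, ∑ b, w a b * (1 - sigmoid (v a - v b)) *
        ((Pi.single i 1 : ι → ℝ) a - (Pi.single i 1 : ι → ℝ) b) =
      ∑ k, (w i k * (1 - sigmoid (v i - v k)) - w k i * (1 - sigmoid (v k - v i))) := by
    simp only [Pi.single_apply, mul_sub, mul_ite, mul_one, mul_zero, sum_sub_distrib,
      sum_ite_irrel, sum_const_zero, sum_ite_eq', mem_univ, if_true]
  have hderiv := hasDerivAt_logLik_add_smul w v (Pi.single i 1)
  rw [hdir] at hderiv
  refine IsLocalMax.hasDerivAt_eq_zero (Filter.Eventually.of_forall fun t => ?_) hderiv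
  simpa using hmax _

lemma sum_sum_ite_lt_eq_logLik [LinearOrder ι] {w : ι → ι → ℝ} (hw : ∀ i, w i i = 0)
    (v : ι → ℝ) :
    (∑ i, ∑ j, if i < j then
        w i j * log (exp (v i) / (exp (v i) + exp (v j)))
          + w j i * log (exp (v j) / (exp (v i) + exp (v j)))
      else 0) = logLik w v := by
  rw [logLik, ← sum_sum_ite_lt_add_sum_diag fun a b => w a b * log (sigmoid (v a - v b))]
  simp only [hw, zero_mul, sum_const_zero, add_zero]
  refine sum_congr rfl fun i _ => sum_congr rfl fun j _ => ?_
  rw [exp_div_exp_add_exp, add_comm (exp (v i)), exp_div_exp_add_exp]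

lemma strictMono_sum_sigmoid_sub [Nonempty ι] (c : ι → ℝ) :
    StrictMono fun x => ∑ k, sigmoid (x - c k) := fun _ _ hxy =>
  sum_lt_sum_of_nonempty univ_nonempty fun k _ => sigmoid_lt (sub_lt_sub_right hxy (c k))

end BradleyTerry

section Profile

variable {M : ℕ} {σ : Equiv.Perm (Fin M) → ℝ}

lemma pref_self (i : Fin M) : Pref M σ i i = 0 := by
  simp [Pref]

lemma pref_add_pref_of_ne (hσ : ∑ r, σ r = 1) {i j : Fin M} (hij : i ≠ j) :
    Pref M σ i j + Pref M σ j i = 1 := by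
  rw [Pref, Pref, ← sum_add_distrib]
  refine (sum_congr rfl fun r _ => ?_).trans hσ
  rcases (r.injective.ne hij).lt_or_gt with h | h <;> simp [h, h.not_gt]

lemma Equiv.Perm.sum_ite_lt_apply (r : Equiv.Perm (Fin M)) (i : Fin M) :
    ∑ k, (if r i < r k then (1 : ℝ) else 0) = M - 1 - (r i : ℕ) := by
  rw [Equiv.sum_comp r fun m => if r i < m then (1 : ℝ) else 0, sum_boole, filter_lt_eq_Ioi,
    Fin.card_Ioi]
  have := (r i).isLt
  rw [Nat.cast_sub (by omega), Nat.cast_sub (by omega), Nat.cast_one]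

lemma borda_eq_sum_pref (i : Fin M) : Borda M σ i = ∑ k, Pref M σ i k := by
  simp only [Borda, Pref]
  rw [sum_comm]
  exact sum_congr rfl fun r _ => by rw [← mul_sum, r.sum_ite_lt_apply]

open BradleyTerry in
lemma borda_eq_sum_sigmoid_sub_half (hσ : ∑ r, σ r = 1) {v : Fin M → ℝ}
    (hmax : ∀ u, logLik (Pref M σ) u ≤ logLik (Pref M σ) v) (i : Fin M) :
    Borda M σ i = ∑ k, sigmoid (v i - v k) - 1 / 2 := by
  classical
  have hterm : ∀ k, Pref M σ i k * (1 - sigmoid (v i - v k))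
      - Pref M σ k i * (1 - sigmoid (v k - v i))
      = Pref M σ i k - sigmoid (v i - v k) + if k = i then 1 / 2 else 0 := by
    intro k
    -- the diagonal term vanishes on the left, while on the right it is `0 - sigmoid 0 + 1 / 2`
    rcases eq_or_ne k i with rfl | hki
    · simp [pref_self, sigmoid_zero]
    · rw [if_neg hki, ← neg_sub (v i), sigmoid_neg]
      linear_combination (-sigmoid (v i - v k)) * pref_add_pref_of_ne hσ hki
  have hstat := sum_sub_eq_zero_of_forall_logLik_le hmax i
  simp only [hterm, sum_add_distrib, sum_sub_distrib, sum_ite_eq', mem_univ, if_true] at hstat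
  rw [borda_eq_sum_pref]
  linarith

end Profile

theorem bt_mle_ranking_eq_borda_ranking_general
    (M : ℕ) (σ : Equiv.Perm (Fin M) → ℝ) (hσ : IsProfile M σ)
    (L : (Fin M → ℝ) → ℝ)
    (hL : ∀ v : Fin M → ℝ, L v =
      ∑ i : Fin M, ∑ j : Fin M, if i < j then
        Pref M σ i j * Real.log (Real.exp (v i) / (Real.exp (v i) + Real.exp (v j)))
          + Pref M σ j i * Real.log (Real.exp (v j) / (Real.exp (v i) + Real.exp (v j)))
      else 0)
    (rstar : Fin M → ℝ) (hmax : ∀ v : Fin M → ℝ, L v ≤ L rstar) :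
    ∀ i j : Fin M, rstar i > rstar j ↔ Borda M σ i > Borda M σ j := by
  intro i j
  have hlik : ∀ v, L v = BradleyTerry.logLik (Pref M σ) v := fun v =>
    (hL v).trans (BradleyTerry.sum_sum_ite_lt_eq_logLik pref_self v)
  have hborda := borda_eq_sum_sigmoid_sub_half hσ.2 fun u => by simpa only [hlik] using hmax u
  have : Nonempty (Fin M) := ⟨i⟩
  rw [gt_iff_lt, gt_iff_lt, hborda i, hborda j, sub_lt_sub_iff_right]
  exact (BradleyTerry.strictMono_sum_sigmoid_sub rstar).lt_iff_lt.symm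

/-- A global maximizer of the Bradley–Terry log-likelihood induces
the same ordering of the alternatives as the Borda score. -/
theorem bt_mle_ranking_eq_borda_ranking
    (M : ℕ) (hM : 2 ≤ M) (σ : Equiv.Perm (Fin M) → ℝ) (hσ : IsProfile M σ)
    (L : (Fin M → ℝ) → ℝ)
    (hL : ∀ v : Fin M → ℝ, L v =
      ∑ i : Fin M, ∑ j : Fin M, if i < j then
        Pref M σ i j * Real.log (Real.exp (v i) / (Real.exp (v i) + Real.exp (v j)))
          + Pref M σ j i * Real.log (Real.exp (v j) / (Real.exp (v i) + Real.exp (v j)))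
      else 0)
    (rstar : Fin M → ℝ) (hmax : ∀ v : Fin M → ℝ, L v ≤ L rstar) :
    ∀ i j : Fin M, rstar i > rstar j ↔ Borda M σ i > Borda M σ j :=
  bt_mle_ranking_eq_borda_ranking_general M σ hσ L hL rstar hmax
end
end

section
/- For every integer M ≥ 2 and every ε with 0 < ε < 1/M, there exists a profile σ over rankings of M alternatives whose top-choice shares are w^σ_1 = 1/M + ε, w^σ_2 = 1/M − ε, and w^σ_j = 1/M for all j ≥ 3, and such that y_1 is the unique maximizer of the Borda score B. Consequently, any rule that places all probability on Borda-score maximizers assigns probability 0 to y_2 even though w^σ_2 > 0, so the maximal Borda rule violates α-PPA for every positive α. -/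
/-!
Put weight `w k` on the cyclic ranking `i ↦ i - k`, whose top choice is `y_k`. With uniform
weights all Borda scores coincide, since every alternative takes every position exactly once.
Shifting `ε` of weight from the ranking headed by `y_2` to the one headed by `y_1` changes the
score of each alternative by `ε` times the number of places it gains between these two rankings:
`y_1` moves from last to first place and gains `ε (M - 1)`, while every other alternative moves
down one place and loses `ε`. So `y_1` is the unique Borda maximizer, and a rule supported on
Borda maximizers gives `y_2` nothing.
-/

open Finset

noncomputable section

section CyclicProfile

variable {M : ℕ} [NeZero M]

/-- The ranking `Equiv.subRight k` puts alternative `i` in position `i - k`, so its top choice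
is `k`. -/
def cyclicProfile (c : Fin M → ℝ) (r : Equiv.Perm (Fin M)) : ℝ :=
  ∑ k, if r = Equiv.subRight k then c k else 0

theorem sum_cyclicProfile_mul (c : Fin M → ℝ) (g : Equiv.Perm (Fin M) → ℝ) :
    ∑ r, cyclicProfile c r * g r = ∑ k, c k * g (Equiv.subRight k) := by
  simp only [cyclicProfile, Finset.sum_mul, ite_mul, zero_mul]
  rw [Finset.sum_comm]
  simp

theorem isProfile_cyclicProfile {c : Fin M → ℝ} (hc : ∀ k, 0 ≤ c k)
    (hsum : ∑ k, c k = 1) : IsProfile M (cyclicProfile c) := by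
  refine ⟨fun r => Finset.sum_nonneg fun k _ => ?_, ?_⟩
  · split_ifs
    exacts [hc k, le_rfl]
  · simpa [hsum] using sum_cyclicProfile_mul c 1

theorem topShare_cyclicProfile (c : Fin M → ℝ) (i : Fin M) :
    topShare M (cyclicProfile c) i = c i := by
  calc topShare M (cyclicProfile c) i
      = ∑ r, cyclicProfile c r * if (r i : ℕ) = 0 then 1 else 0 := by
        simp only [topShare, mul_boole]
    _ = ∑ k, c k * if i = k then 1 else 0 := by
        rw [sum_cyclicProfile_mul]
        simp [Fin.val_eq_zero_iff, sub_eq_zero]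
    _ = c i := by simp

theorem borda_cyclicProfile (c : Fin M → ℝ) (i : Fin M) :
    Borda M (cyclicProfile c) i = ∑ k, c k * ((M : ℝ) - 1 - ((i - k : Fin M) : ℕ)) :=
  sum_cyclicProfile_mul c _

end CyclicProfile

section TiltedWeights

def tiltedWeights (M : ℕ) [NeZero M] (ε : ℝ) (k : Fin M) : ℝ :=
  1 / M + ε * ((if k = 0 then 1 else 0) - if k = 1 then 1 else 0)

variable {M : ℕ} [NeZero M] {ε : ℝ}

theorem tiltedWeights_nonneg (hε0 : 0 ≤ ε) (hε1 : ε ≤ 1 / M) (k : Fin M) :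
    0 ≤ tiltedWeights M ε k := by
  unfold tiltedWeights
  split_ifs <;> nlinarith

theorem sum_tiltedWeights : ∑ k, tiltedWeights M ε k = 1 := by
  simp [tiltedWeights, Finset.sum_add_distrib, ← Finset.mul_sum, Finset.sum_sub_distrib,
    NeZero.ne]

theorem tiltedWeights_of_ne {k : Fin M} (h0 : k ≠ 0) (h1 : k ≠ 1) :
    tiltedWeights M ε k = 1 / M := by
  simp [tiltedWeights, h0, h1]

theorem tiltedWeights_zero (h : (1 : Fin M) ≠ 0) : tiltedWeights M ε 0 = 1 / M + ε := by
  simp [tiltedWeights, h.symm]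

theorem tiltedWeights_one (h : (1 : Fin M) ≠ 0) : tiltedWeights M ε 1 = 1 / M - ε := by
  simp [tiltedWeights, h, sub_eq_add_neg]

theorem borda_cyclicProfile_tiltedWeights (i : Fin M) :
    Borda M (cyclicProfile (tiltedWeights M ε)) i =
      1 / M * ∑ k : Fin M, ((M : ℝ) - 1 - (k : ℕ)) +
        ε * (((i - 1 : Fin M) : ℕ) - (i : ℕ)) := by
  have hshift : ∑ k : Fin M, ((M : ℝ) - 1 - ((i - k : Fin M) : ℕ)) =
      ∑ k : Fin M, ((M : ℝ) - 1 - (k : ℕ)) :=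
    (Equiv.subLeft i).sum_comp fun k : Fin M => (M : ℝ) - 1 - (k : ℕ)
  rw [borda_cyclicProfile]
  simp only [tiltedWeights, add_mul, Finset.sum_add_distrib, ← Finset.mul_sum, hshift]
  simp [mul_assoc, sub_mul, ite_mul, Finset.sum_sub_distrib, ← Finset.mul_sum]

theorem borda_lt_borda_zero (hε : 0 < ε) {i : Fin M} (hi : i ≠ 0) :
    Borda M (cyclicProfile (tiltedWeights M ε)) i <
      Borda M (cyclicProfile (tiltedWeights M ε)) 0 := by
  obtain ⟨n, rfl⟩ := Nat.exists_eq_add_one_of_ne_zero (NeZero.ne M)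
  have hi1 : 1 ≤ (i : ℕ) := Nat.one_le_iff_ne_zero.mpr (Fin.val_ne_zero_iff.mpr hi)
  rw [borda_cyclicProfile_tiltedWeights, borda_cyclicProfile_tiltedWeights,
    Fin.val_sub_one_of_ne_zero hi, zero_sub, Fin.val_zero, Fin.coe_neg_one, Nat.cast_sub hi1]
  push_cast
  nlinarith

end TiltedWeights

/-- For every `M ≥ 2` and `0 < ε < 1/M` there is a profile with
top-choice shares `(1/M + ε, 1/M − ε, 1/M, …, 1/M)` whose unique Borda maximizer
is `y_1`; hence any rule supported on Borda maximizers gives probability `0` to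
`y_2` although `w_2 > 0`, violating `α`-PPA for every `α > 0`. -/
theorem maximal_borda_violates_PPA
    (M : ℕ) (hM : 2 ≤ M) (ε : ℝ) (hε0 : 0 < ε) (hε1 : ε < 1 / M) :
    ∃ σ : Equiv.Perm (Fin M) → ℝ, IsProfile M σ ∧
      topShare M σ ⟨0, by omega⟩ = 1 / M + ε ∧
      topShare M σ ⟨1, by omega⟩ = 1 / M - ε ∧
      (∀ j : Fin M, j ≠ ⟨0, by omega⟩ → j ≠ ⟨1, by omega⟩ → topShare M σ j = 1 / M) ∧
      (∀ j : Fin M, j ≠ ⟨0, by omega⟩ → Borda M σ j < Borda M σ ⟨0, by omega⟩) ∧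
      ∀ π : Fin M → ℝ, (∀ j, 0 ≤ π j) → (∑ j, π j = 1) →
        (∀ j : Fin M, (∃ k, Borda M σ j < Borda M σ k) → π j = 0) →
        ∀ α : ℝ, 0 < α → ¬ α * topShare M σ ⟨1, by omega⟩ ≤ π ⟨1, by omega⟩ := by
  have : NeZero M := ⟨by omega⟩
  have h0 : (⟨0, by omega⟩ : Fin M) = 0 := rfl
  have h1 : (⟨1, by omega⟩ : Fin M) = 1 := Fin.ext (Nat.mod_eq_of_lt hM).symm
  have h10 : (1 : Fin M) ≠ 0 := by rw [Ne, Fin.one_eq_zero_iff]; omega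
  set σ := cyclicProfile (tiltedWeights M ε)
  have hσ1 : topShare M σ 1 = 1 / M - ε := by
    rw [topShare_cyclicProfile, tiltedWeights_one h10]
  refine ⟨σ, isProfile_cyclicProfile (tiltedWeights_nonneg hε0.le hε1.le) sum_tiltedWeights,
    ?_, ?_, fun j hj0 hj1 => ?_, fun j hj => borda_lt_borda_zero hε0 hj, ?_⟩
  · rw [h0, topShare_cyclicProfile, tiltedWeights_zero h10]
  · rw [h1, hσ1]
  · rw [topShare_cyclicProfile, tiltedWeights_of_ne hj0 (h1 ▸ hj1)]
  · intro π _ _ hπ α hα hle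
    rw [h1, hσ1, hπ 1 ⟨0, borda_lt_borda_zero hε0 h10⟩] at hle
    exact (mul_pos hα (sub_pos.mpr hε1)).not_ge hle
end
end

section
/- Let M = 3, let σ_1 be the profile placing mass 1/3 on each of the rankings (y_1 ≻ y_2 ≻ y_3), (y_2 ≻ y_1 ≻ y_3), (y_3 ≻ y_1 ≻ y_2), and let σ_2 be the profile placing mass 2/3 on (y_1 ≻ y_2 ≻ y_3) and mass 1/3 on (y_3 ≻ y_2 ≻ y_1). Then the induced preference functions coincide, P^{σ_1}(y_i ≻ y_j) = P^{σ_2}(y_i ≻ y_j) for all i, j, while the top-choice share vectors differ: w^{σ_1} = (1/3, 1/3, 1/3) and w^{σ_2} = (2/3, 0, 1/3). Consequently, there is no function F defined on preference functions such that F(P^σ) = w^σ for every profile σ, i.e., the random dictatorship rule is not implementable from pairwise comparison data. -/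
/-!
Pairwise comparison data records, for each ordered pair, only the total mass of the rankings
placing `y_i` above `y_j`. Both profiles give mass `2/3` to each of `y_1 ≻ y_2`, `y_1 ≻ y_3`,
`y_2 ≻ y_3`, yet `y_1` is on top with mass `1/3` under `σ₁` and `2/3` under `σ₂`; so any `F`
recovering top-choice shares from the preference function would give two values at one point.
-/

open Finset

noncomputable section

theorem Equiv.Perm.sum_univ_fin_three {β : Type*} [AddCommMonoid β]
    (f : Equiv.Perm (Fin 3) → β) :
    ∑ r, f r = f 1 + f (Equiv.swap 0 1) + f (Equiv.swap 0 2) + f (Equiv.swap 1 2)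
      + f (finRotate 3) + f (finRotate 3)⁻¹ := by
  have huniv : (univ : Finset (Equiv.Perm (Fin 3))) =
      {1, Equiv.swap 0 1, Equiv.swap 0 2, Equiv.swap 1 2, finRotate 3, (finRotate 3)⁻¹} := by
    decide
  rw [huniv, sum_insert (by decide), sum_insert (by decide), sum_insert (by decide),
    sum_insert (by decide), sum_insert (by decide), sum_singleton]
  simp only [add_assoc]

theorem not_exists_topShare_eq_comp_pref {M : ℕ} {σ τ : Equiv.Perm (Fin M) → ℝ}
    (hσ : IsProfile M σ) (hτ : IsProfile M τ) (hpref : ∀ i j, Pref M σ i j = Pref M τ i j)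
    {i : Fin M} (hshare : topShare M σ i ≠ topShare M τ i) :
    ¬ ∃ F : (Fin M → Fin M → ℝ) → (Fin M → ℝ), ∀ σ, IsProfile M σ →
      F (fun i j => Pref M σ i j) = fun i => topShare M σ i := by
  rintro ⟨F, hF⟩
  have hP : (fun i j => Pref M σ i j) = fun i j => Pref M τ i j := funext₂ hpref
  exact hshare (congrFun ((hF σ hσ).symm.trans (hP ▸ hF τ hτ)) i)

/-- two profiles with the same induced preference function but
different top-choice share vectors, so no function of the preference function
can recover the top-choice shares (random dictatorship is not implementable). -/
theorem random_dictatorship_not_implementable :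
    let r123 : Equiv.Perm (Fin 3) := 1
    let r213 : Equiv.Perm (Fin 3) := Equiv.swap 0 1
    let r312 : Equiv.Perm (Fin 3) := finRotate 3
    let r321 : Equiv.Perm (Fin 3) := Equiv.swap 0 2
    let σ₁ : Equiv.Perm (Fin 3) → ℝ := fun r =>
      if r = r123 then 1/3 else if r = r213 then 1/3 else if r = r312 then 1/3 else 0
    let σ₂ : Equiv.Perm (Fin 3) → ℝ := fun r =>
      if r = r123 then 2/3 else if r = r321 then 1/3 else 0
    IsProfile 3 σ₁ ∧ IsProfile 3 σ₂ ∧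
    (∀ i j : Fin 3, Pref 3 σ₁ i j = Pref 3 σ₂ i j) ∧
    (topShare 3 σ₁ 0 = 1/3 ∧ topShare 3 σ₁ 1 = 1/3 ∧ topShare 3 σ₁ 2 = 1/3) ∧
    (topShare 3 σ₂ 0 = 2/3 ∧ topShare 3 σ₂ 1 = 0 ∧ topShare 3 σ₂ 2 = 1/3) ∧
    ¬ ∃ F : (Fin 3 → Fin 3 → ℝ) → (Fin 3 → ℝ),
        ∀ σ : Equiv.Perm (Fin 3) → ℝ, IsProfile 3 σ →
          F (fun i j => Pref 3 σ i j) = fun i => topShare 3 σ i := by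
  intro r123 r213 r312 r321 σ₁ σ₂
  have hσ₁ : IsProfile 3 σ₁ := by
    refine ⟨fun r => ?_, ?_⟩
    · simp only [σ₁]; split_ifs <;> norm_num
    · simp +decide only [σ₁, r123, r213, r312, Equiv.Perm.sum_univ_fin_three]; norm_num
  have hσ₂ : IsProfile 3 σ₂ := by
    refine ⟨fun r => ?_, ?_⟩
    · simp only [σ₂]; split_ifs <;> norm_num
    · simp +decide only [σ₂, r123, r321, Equiv.Perm.sum_univ_fin_three]; norm_num
  have hpref : ∀ i j : Fin 3, Pref 3 σ₁ i j = Pref 3 σ₂ i j := by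
    intro i j
    fin_cases i <;> fin_cases j <;>
      simp +decide only [σ₁, σ₂, r123, r213, r312, r321, Pref,
        Equiv.Perm.sum_univ_fin_three] <;> norm_num
  have hshare₁ : topShare 3 σ₁ 0 = 1/3 ∧ topShare 3 σ₁ 1 = 1/3 ∧
      topShare 3 σ₁ 2 = 1/3 := by
    refine ⟨?_, ?_, ?_⟩ <;>
      simp +decide only [σ₁, r123, r213, r312, topShare,
        Equiv.Perm.sum_univ_fin_three] <;> norm_num
  have hshare₂ : topShare 3 σ₂ 0 = 2/3 ∧ topShare 3 σ₂ 1 = 0 ∧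
      topShare 3 σ₂ 2 = 1/3 := by
    refine ⟨?_, ?_, ?_⟩ <;>
      simp +decide only [σ₂, r123, r321, topShare,
        Equiv.Perm.sum_univ_fin_three] <;> norm_num
  refine ⟨hσ₁, hσ₂, hpref, hshare₁, hshare₂,
    not_exists_topShare_eq_comp_pref hσ₁ hσ₂ hpref (i := 0) ?_⟩
  rw [hshare₁.1, hshare₂.1]
  norm_num
end
end

section
/- Let P be a preference function induced by some profile over rankings of M alternatives and let w = (w_1, …, w_M) be a probability vector. Suppose there exist profiles σ_1, …, σ_M, each σ_k supported on rankings that place y_k first, such that P(y_i ≻ y_j) = Σ_{k=1}^M w_k · P^{σ_k}(y_i ≻ y_j) for all i ≠ j. Then for every i, w_i ≤ u_i := min_{j ≠ i} P(y_i ≻ y_j). In other words, the feasible set W(P) is contained in the polyhedral outer approximation { w : w_i ≤ u_i for all i }. -/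
open Finset

noncomputable section

theorem Pref_nonneg {M : ℕ} {σ : Equiv.Perm (Fin M) → ℝ} (hσ : ∀ r, 0 ≤ σ r) (i j : Fin M) :
    0 ≤ Pref M σ i j :=
  Finset.sum_nonneg fun r _ => mul_nonneg (hσ r) (by positivity)

theorem Pref_eq_one_of_ranks_first {M : ℕ} {σ : Equiv.Perm (Fin M) → ℝ}
    (hσ : ∑ r : Equiv.Perm (Fin M), σ r = 1) {i j : Fin M}
    (hfirst : ∀ r, σ r ≠ 0 → (r i : ℕ) = 0) (hji : j ≠ i) : Pref M σ i j = 1 := by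
  rw [← hσ, Pref]
  refine Finset.sum_congr rfl fun r _ => ?_
  by_cases hr : σ r = 0
  · simp [hr]
  · have hrj : r j ≠ r i := r.injective.ne hji
    have hlt : r i < r j := Fin.lt_def.mpr (by have := hfirst r hr; omega)
    simp [hlt]

theorem feasible_shares_subset_outer_approx_general
    (M : ℕ) (hM : 2 ≤ M) (P : Fin M → Fin M → ℝ)
    (w : Fin M → ℝ) (hw0 : ∀ i, 0 ≤ w i)
    (τ : Fin M → Equiv.Perm (Fin M) → ℝ)
    (hτ : ∀ k, IsProfile M (τ k))
    (hτs : ∀ k r, τ k r ≠ 0 → (r k : ℕ) = 0)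
    (hmix : ∀ i j, i ≠ j → P i j = ∑ k, w k * Pref M (τ k) i j) :
    ∀ i, w i ≤ sInf {x : ℝ | ∃ j, j ≠ i ∧ x = P i j} := by
  intro i
  obtain ⟨j₀, hj₀⟩ := Fintype.exists_ne_of_one_lt_card (by rw [Fintype.card_fin]; omega) i
  refine le_csInf ⟨P i j₀, j₀, hj₀, rfl⟩ ?_
  rintro _ ⟨j, hji, rfl⟩
  have hτi : Pref M (τ i) i j = 1 := Pref_eq_one_of_ranks_first (hτ i).2 (hτs i) hji
  calc w i = w i * Pref M (τ i) i j := by rw [hτi, mul_one]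
    _ ≤ ∑ k, w k * Pref M (τ k) i j :=
        Finset.single_le_sum (f := fun k => w k * Pref M (τ k) i j)
          (fun k _ => mul_nonneg (hw0 k) (Pref_nonneg (hτ k).1 i j)) (Finset.mem_univ i)
    _ = P i j := (hmix i j hji.symm).symm

/-- any feasible population share vector `w` for `P` satisfies
`w_i ≤ u_i := min_{j ≠ i} P(y_i ≻ y_j)`, i.e. `W(P) ⊆ 𝑊̄(P)`. -/
theorem feasible_shares_subset_outer_approx
    (M : ℕ) (hM : 2 ≤ M) (P : Fin M → Fin M → ℝ)
    (hP : ∃ σ₀ : Equiv.Perm (Fin M) → ℝ, IsProfile M σ₀ ∧ ∀ i j, P i j = Pref M σ₀ i j)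
    (w : Fin M → ℝ) (hw0 : ∀ i, 0 ≤ w i) (hw1 : ∑ i, w i = 1)
    (τ : Fin M → Equiv.Perm (Fin M) → ℝ)
    (hτ : ∀ k, IsProfile M (τ k))
    (hτs : ∀ k r, τ k r ≠ 0 → (r k : ℕ) = 0)
    (hmix : ∀ i j, i ≠ j → P i j = ∑ k, w k * Pref M (τ k) i j) :
    ∀ i, w i ≤ sInf {x : ℝ | ∃ j, j ≠ i ∧ x = P i j} :=
  feasible_shares_subset_outer_approx_general M hM P w hw0 τ hτ hτs hmix
end
end

section
/- Let P be an M×M real matrix with entries in [0,1] satisfying P_{ij} + P_{ji} = 1 for all i, j, and let w = (w_1, …, w_M) be a probability vector such that w_i ≤ min_{j ≠ i} P_{ij} for every i. Then there exist M×M matrices P^{(1)}, …, P^{(M)} with entries in [0,1] such that for every k: P^{(k)}_{ij} + P^{(k)}_{ji} = 1 for all i, j; P^{(k)}_{kj} = 1 and P^{(k)}_{jk} = 0 for all j ≠ k; and P_{ij} = Σ_{k=1}^M w_k · P^{(k)}_{ij} for all i, j. That is, in the extended setting where each group may report an arbitrary skew-symmetric pairwise preference function, the outer approximation is tight: every w with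 w_i ≤ min_{j≠i} P_{ij} is feasible. -/
open Finset

noncomputable section

/-!
Put `R i j := (P i j - w i) / (1 - w i - w j)`, the share of `P i j - w i` in
`(P i j - w i) + (P j i - w j) = 1 - w i - w j` (an even split when this vanishes).
The bound `w i ≤ P i j` together with `P i j + P j i = 1` makes `R` a preference matrix, and the
group `k` reports `R` after moving `k` to the top. On a pair `i ≠ j` the groups `i` and `j` then
contribute `w i` and `0`, and all the others together contribute `(1 - w i - w j) * R i j = P i j - w i`.
-/

def pairShare (a b : ℝ) : ℝ :=
  if a + b = 0 then 1 / 2 else a / (a + b)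

lemma pairShare_add_pairShare (a b : ℝ) : pairShare a b + pairShare b a = 1 := by
  unfold pairShare
  rw [add_comm b a]
  split_ifs with h
  · norm_num
  · rw [← add_div, div_self h]

lemma pairShare_nonneg {a b : ℝ} (ha : 0 ≤ a) (hb : 0 ≤ b) : 0 ≤ pairShare a b := by
  unfold pairShare
  split_ifs
  · norm_num
  · positivity

lemma add_mul_pairShare {a b : ℝ} (ha : 0 ≤ a) (hb : 0 ≤ b) : (a + b) * pairShare a b = a := by
  unfold pairShare
  split_ifs with h
  · linarith
  · field_simp

section PrefMatrix

variable {ι : Type*}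

def IsPrefMatrix (Q : ι → ι → ℝ) : Prop :=
  (∀ i j, Q i j ∈ Set.Icc (0 : ℝ) 1) ∧ ∀ i j, Q i j + Q j i = 1

lemma isPrefMatrix_of_nonneg {Q : ι → ι → ℝ} (hskew : ∀ i j, Q i j + Q j i = 1)
    (hnonneg : ∀ i j, i ≠ j → 0 ≤ Q i j) : IsPrefMatrix Q := by
  refine ⟨fun i j => ?_, hskew⟩
  by_cases hij : i = j
  · subst hij
    have := hskew i i
    constructor <;> linarith
  · have := hskew i j
    have := hnonneg j i (Ne.symm hij)
    exact ⟨hnonneg i j hij, by linarith⟩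

variable [DecidableEq ι]

def topAt (k : ι) (Q : ι → ι → ℝ) (i j : ι) : ℝ :=
  if i = j then Q i j else if i = k then 1 else if j = k then 0 else Q i j

lemma topAt_left {k j : ι} (Q : ι → ι → ℝ) (hjk : j ≠ k) : topAt k Q k j = 1 := by
  simp [topAt, Ne.symm hjk]

lemma topAt_right {k j : ι} (Q : ι → ι → ℝ) (hjk : j ≠ k) : topAt k Q j k = 0 := by
  simp [topAt, hjk]

lemma IsPrefMatrix.topAt {Q : ι → ι → ℝ} (hQ : IsPrefMatrix Q) (k : ι) :
    IsPrefMatrix (topAt k Q) := by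
  obtain ⟨hbound, hskew⟩ := hQ
  refine ⟨fun i j => ?_, fun i j => ?_⟩
  · unfold _root_.topAt
    split_ifs <;> simp [hbound]
  · unfold _root_.topAt
    by_cases hij : i = j
    · subst hij
      simpa using hskew i i
    · rw [if_neg hij, if_neg (Ne.symm hij)]
      by_cases hik : i = k
      · subst hik
        simp [Ne.symm hij]
      · by_cases hjk : j = k
        · subst hjk
          simp [hik]
        · simp [hik, hjk, hskew]

lemma sum_mul_topAt_of_ne [Fintype ι] (w : ι → ℝ) (hw : ∑ k, w k = 1) (Q : ι → ι → ℝ)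
    {i j : ι} (hij : i ≠ j) :
    ∑ k, w k * topAt k Q i j = w i + (1 - w i - w j) * Q i j := by
  have hterm : ∀ k, w k * topAt k Q i j = w k * Q i j
      + (if k = i then w k * (1 - Q i j) else 0) - (if k = j then w k * Q i j else 0) := by
    intro k
    unfold topAt
    by_cases hki : k = i
    · subst hki
      simp only [hij, if_false, if_true]
      ring
    · by_cases hkj : k = j
      · subst hkj
        simp [hij, hki]
      · simp [hij, hki, hkj, Ne.symm hki, Ne.symm hkj]
  simp only [hterm, sum_sub_distrib, sum_add_distrib, ← sum_mul, hw, sum_ite_eq', mem_univ,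
    if_true]
  ring

lemma sum_mul_topAt_self [Fintype ι] (w : ι → ℝ) (hw : ∑ k, w k = 1) (Q : ι → ι → ℝ) (i : ι) :
    ∑ k, w k * topAt k Q i i = Q i i := by
  simp [topAt, ← sum_mul, hw]

end PrefMatrix

theorem outer_approx_tight_extended_general
    (M : ℕ) (P : Fin M → Fin M → ℝ)
    (hPskew : ∀ i j, P i j + P j i = 1)
    (w : Fin M → ℝ) (hw1 : ∑ i, w i = 1)
    (hwu : ∀ i j, j ≠ i → w i ≤ P i j) :
    ∃ Q : Fin M → Fin M → Fin M → ℝ,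
      (∀ k i j, Q k i j ∈ Set.Icc (0 : ℝ) 1) ∧
      (∀ k i j, Q k i j + Q k j i = 1) ∧
      (∀ k j, j ≠ k → Q k k j = 1 ∧ Q k j k = 0) ∧
      (∀ i j, P i j = ∑ k, w k * Q k i j) := by
  set R : Fin M → Fin M → ℝ := fun i j => pairShare (P i j - w i) (P j i - w j)
  have hslack : ∀ i j, i ≠ j → 0 ≤ P i j - w i := fun i j hij =>
    sub_nonneg.mpr (hwu i j (Ne.symm hij))
  have hR : IsPrefMatrix R := isPrefMatrix_of_nonneg (fun i j => pairShare_add_pairShare _ _)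
    fun i j hij => pairShare_nonneg (hslack i j hij) (hslack j i (Ne.symm hij))
  refine ⟨fun k => topAt k R, fun k => (hR.topAt k).1, fun k => (hR.topAt k).2,
    fun k j hjk => ⟨topAt_left R hjk, topAt_right R hjk⟩, fun i j => ?_⟩
  by_cases hij : i = j
  · subst hij
    rw [sum_mul_topAt_self w hw1]
    linarith [hPskew i i, hR.2 i i]
  · have hmass : 1 - w i - w j = (P i j - w i) + (P j i - w j) := by linarith [hPskew i j]
    rw [sum_mul_topAt_of_ne w hw1 R hij, hmass,
      add_mul_pairShare (hslack i j hij) (hslack j i (Ne.symm hij))]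
    ring

/-- in the extended setting of arbitrary skew-symmetric pairwise
preference matrices, the outer approximation is tight: any probability vector
`w` with `w_i ≤ min_{j ≠ i} P_{ij}` arises from a `w`-mixture of unanimous
group preference matrices. -/
theorem outer_approx_tight_extended
    (M : ℕ) (hM : 2 ≤ M) (P : Fin M → Fin M → ℝ)
    (hP01 : ∀ i j, P i j ∈ Set.Icc (0 : ℝ) 1)
    (hPskew : ∀ i j, P i j + P j i = 1)
    (w : Fin M → ℝ) (hw0 : ∀ i, 0 ≤ w i) (hw1 : ∑ i, w i = 1)
    (hwu : ∀ i j, j ≠ i → w i ≤ P i j) :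
    ∃ Q : Fin M → Fin M → Fin M → ℝ,
      (∀ k i j, Q k i j ∈ Set.Icc (0 : ℝ) 1) ∧
      (∀ k i j, Q k i j + Q k j i = 1) ∧
      (∀ k j, j ≠ k → Q k k j = 1 ∧ Q k j k = 0) ∧
      (∀ i j, P i j = ∑ k, w k * Q k i j) :=
  outer_approx_tight_extended_general M P hPskew w hw1 hwu
end
end

section
/- Let M ≥ 2. Suppose α is a real number and F is a function that assigns to each preference function induced by a profile a probability distribution over the M alternatives, such that for every profile σ and every i, F(P^σ)(y_i) ≥ α · w^σ_i. Then α ≤ 2/M. That is, no preference-learning algorithm can guarantee population-proportional alignment with a uniform constant exceeding 2/M. -/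
open Finset

noncomputable section

/-!
A ranking mixed half-and-half with its reversal expresses no preference at all: the mixture
induces `P(y_a ≻ y_b) = 1/2` for every `a ≠ b`, whichever ranking we start from. Starting from a
ranking with `y_i` on top gives a profile in which `y_i` has top-choice share `1/2`, yet all these
profiles induce the same preference function. So `F` must give every alternative at least `α/2`
at that single preference function, and summing over the `M` alternatives gives `M α / 2 ≤ 1`.
-/

def indifferentPref (M : ℕ) (a b : Fin M) : ℝ :=
  if a = b then 0 else 1 / 2

theorem topShare_eq_sum_mul {M : ℕ} (σ : Equiv.Perm (Fin M) → ℝ) (i : Fin M) :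
    topShare M σ i = ∑ r, σ r * if (r i : ℕ) = 0 then 1 else 0 := by
  simp only [topShare, mul_ite, mul_one, mul_zero]

namespace Equiv.Perm

variable {M : ℕ}

def reversalProfile (r : Equiv.Perm (Fin M)) : Equiv.Perm (Fin M) → ℝ :=
  Pi.single r (1 / 2) + Pi.single (r.trans Fin.revPerm) (1 / 2)

theorem sum_reversalProfile_mul (r : Equiv.Perm (Fin M)) (g : Equiv.Perm (Fin M) → ℝ) :
    ∑ t, r.reversalProfile t * g t = (g r + g (r.trans Fin.revPerm)) / 2 := by
  simp only [reversalProfile, Pi.add_apply, Pi.single_apply, add_mul, ite_mul, zero_mul,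
    sum_add_distrib, sum_ite_eq', mem_univ, if_true]
  ring

theorem isProfile_reversalProfile (r : Equiv.Perm (Fin M)) : IsProfile M r.reversalProfile := by
  refine ⟨fun t => ?_, ?_⟩
  · simp only [reversalProfile, Pi.add_apply, Pi.single_apply]
    positivity
  · simpa using r.sum_reversalProfile_mul 1

theorem pref_reversalProfile (r : Equiv.Perm (Fin M)) :
    Pref M r.reversalProfile = indifferentPref M := by
  ext a b
  simp only [Pref, sum_reversalProfile_mul, Equiv.trans_apply, Fin.revPerm_apply,
    Fin.rev_lt_rev, indifferentPref]
  by_cases hab : a = b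
  · simp [hab]
  · rcases (r.injective.ne hab).lt_or_gt with h | h
    · simp [hab, h, h.not_gt]
    · simp [hab, h, h.not_gt]

theorem topShare_reversalProfile (r : Equiv.Perm (Fin M)) (hM : 2 ≤ M) {i : Fin M}
    (hi : (r i : ℕ) = 0) : topShare M r.reversalProfile i = 1 / 2 := by
  have hM1 : M - 1 ≠ 0 := by omega
  rw [topShare_eq_sum_mul, sum_reversalProfile_mul]
  simp [hi, hM1]

end Equiv.Perm

/-- no preference-learning algorithm (a map from induced
preference functions to probability distributions over alternatives) can
guarantee `F(P^σ)(y_i) ≥ α · w^σ_i` for all profiles with a constant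
`α > 2/M`. -/
theorem no_uniform_PPA_above_two_over_M
    (M : ℕ) (hM : 2 ≤ M) (α : ℝ)
    (F : (Fin M → Fin M → ℝ) → Fin M → ℝ)
    (hdist : ∀ σ : Equiv.Perm (Fin M) → ℝ, IsProfile M σ →
      (∀ i, 0 ≤ F (Pref M σ) i) ∧ ∑ i, F (Pref M σ) i = 1)
    (hppa : ∀ σ : Equiv.Perm (Fin M) → ℝ, IsProfile M σ →
      ∀ i, α * topShare M σ i ≤ F (Pref M σ) i) :
    α ≤ 2 / M := by
  have hlow : ∀ i, α / 2 ≤ F (indifferentPref M) i := by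
    intro i
    let r := Equiv.swap i ⟨0, by omega⟩
    have hi : (r i : ℕ) = 0 := by simp [r]
    have := hppa _ r.isProfile_reversalProfile i
    rwa [r.topShare_reversalProfile hM hi, r.pref_reversalProfile, ← div_eq_mul_one_div] at this
  have hsum : ∑ i, F (indifferentPref M) i = 1 := by
    have := (hdist _ (Equiv.Perm.isProfile_reversalProfile 1)).2
    rwa [Equiv.Perm.pref_reversalProfile] at this
  have hbound : (M : ℝ) * (α / 2) ≤ 1 := by
    simpa [← hsum] using card_nsmul_le_sum univ _ _ fun i _ => hlow i
  rw [le_div_iff₀ (by positivity)]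
  linarith
end
end

section
/- Let σ be a profile over rankings of M alternatives and suppose that for every ranking r with σ_r > 0 we have r(y_i) < r(y_j). Then u_j = 0 and hence Φ*(σ)(y_j) = 0 ≤ Φ*(σ)(y_i); that is, the policy Φ* is Pareto efficient. -/
open Finset

noncomputable section

/-! If every ranking in the support of `σ` puts `y_i` above `y_j`, then `P^σ(y_j ≻ y_i)` is a sum
of zero terms, so `u_j ≤ P^σ(y_j ≻ y_i) = 0`. Since all `u_k` are nonnegative, `Φ*(σ)(y_j) = 0`
while `Φ*(σ)(y_i)` is a quotient of nonnegative numbers. -/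

theorem IsProfile.exists_pos {M : ℕ} {σ : Equiv.Perm (Fin M) → ℝ} (hσ : IsProfile M σ) :
    ∃ r, 0 < σ r := by
  by_contra! h
  have hzero : ∑ r, σ r = 0 := sum_eq_zero fun r _ => le_antisymm (h r) (hσ.1 r)
  linarith [hσ.2]

section Nonneg

variable {M : ℕ} {σ : Equiv.Perm (Fin M) → ℝ}

theorem pref_nonneg (hσ : ∀ r, 0 ≤ σ r) (i j : Fin M) : 0 ≤ Pref M σ i j :=
  sum_nonneg fun r _ => mul_nonneg (hσ r) (by split_ifs <;> norm_num)

theorem minPref_nonneg (hσ : ∀ r, 0 ≤ σ r) (i : Fin M) : 0 ≤ minPref M σ i :=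
  Real.sInf_nonneg <| by
    rintro x ⟨j, -, rfl⟩
    exact pref_nonneg hσ i j

theorem phiStar_nonneg (hσ : ∀ r, 0 ≤ σ r) (i : Fin M) : 0 ≤ PhiStar M σ i :=
  div_nonneg (minPref_nonneg hσ i) (sum_nonneg fun j _ => minPref_nonneg hσ j)

theorem minPref_eq_zero_of_pref_eq_zero (hσ : ∀ r, 0 ≤ σ r) {i j : Fin M} (hji : j ≠ i)
    (h : Pref M σ i j = 0) : minPref M σ i = 0 := by
  refine le_antisymm ?_ (minPref_nonneg hσ i)
  have hbdd : BddBelow {x : ℝ | ∃ j, j ≠ i ∧ x = Pref M σ i j} := by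
    refine ⟨0, ?_⟩
    rintro x ⟨k, -, rfl⟩
    exact pref_nonneg hσ i k
  exact h ▸ csInf_le hbdd ⟨j, hji, rfl⟩

theorem pref_eq_zero_of_support_ranks_above (hσ : ∀ r, 0 ≤ σ r) {i j : Fin M}
    (h : ∀ r : Equiv.Perm (Fin M), 0 < σ r → r i < r j) : Pref M σ j i = 0 := by
  refine sum_eq_zero fun r _ => ?_
  rcases (hσ r).eq_or_lt with hr | hr
  · rw [← hr, zero_mul]
  · rw [if_neg (h r hr).not_gt, mul_zero]

end Nonneg

theorem phiStar_pareto_efficient_general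
    (M : ℕ) (σ : Equiv.Perm (Fin M) → ℝ) (hσ : IsProfile M σ)
    (i j : Fin M) (h : ∀ r : Equiv.Perm (Fin M), 0 < σ r → r i < r j) :
    minPref M σ j = 0 ∧ PhiStar M σ j = 0 ∧ PhiStar M σ j ≤ PhiStar M σ i := by
  obtain ⟨r₀, hr₀⟩ := hσ.exists_pos
  have hij : i ≠ j := fun hij => (h r₀ hr₀).ne (congrArg r₀ hij)
  have hminj : minPref M σ j = 0 :=
    minPref_eq_zero_of_pref_eq_zero hσ.1 hij (pref_eq_zero_of_support_ranks_above hσ.1 h)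
  have hphij : PhiStar M σ j = 0 := by rw [PhiStar, hminj, zero_div]
  exact ⟨hminj, hphij, hphij ▸ phiStar_nonneg hσ.1 i⟩

/-- if every ranking in the support of `σ` places `y_i` above
`y_j`, then `u_j = 0` and hence `Φ*(σ)(y_j) = 0 ≤ Φ*(σ)(y_i)`: the policy
`Φ*` is Pareto efficient. -/
theorem phiStar_pareto_efficient
    (M : ℕ) (hM : 2 ≤ M) (σ : Equiv.Perm (Fin M) → ℝ) (hσ : IsProfile M σ)
    (i j : Fin M) (h : ∀ r : Equiv.Perm (Fin M), 0 < σ r → r i < r j) :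
    minPref M σ j = 0 ∧ PhiStar M σ j = 0 ∧ PhiStar M σ j ≤ PhiStar M σ i :=
  phiStar_pareto_efficient_general M σ hσ i j h
end
end

section
/- For every profile σ over rankings of M alternatives and every index i, the policy π := Φ*(σ) satisfies π(y_i) · Σ_{j=1}^M u_j ≥ w^σ_i; equivalently, whenever w^σ_i > 0, the proportionality ratio satisfies π(y_i)/w^σ_i ≥ (Σ_{j=1}^M u_j)^{-1}. -/
/-!
Every top-choice ranking of `y_i` also ranks `y_i` above each other `y_j`, so `w_i ≤ P(y_i ≻ y_j)`
for all `j ≠ i`, i.e. `w_i ≤ u_i`. Since the top-choice shares sum to `1`, the normaliser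
`Σ_j u_j` is at least `1`, hence positive, and `π(y_i) · Σ_j u_j = u_i ≥ w_i`.
-/

open Finset

noncomputable section

section Profile

variable {M : ℕ} {σ : Equiv.Perm (Fin M) → ℝ}

theorem topShare_le_pref (hσ : ∀ r, 0 ≤ σ r) {i j : Fin M} (hji : j ≠ i) :
    topShare M σ i ≤ Pref M σ i j := by
  refine sum_le_sum fun r _ => ?_
  by_cases htop : (r i : ℕ) = 0
  · have hlt : r i < r j := by
      rw [Fin.lt_def, htop, Nat.pos_iff_ne_zero]
      exact fun h => hji (r.injective (Fin.ext (h.trans htop.symm)))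
    simp [htop, hlt]
  · rw [if_neg htop]
    exact mul_nonneg (hσ r) (by split_ifs <;> norm_num)

theorem topShare_le_minPref (hM : 2 ≤ M) (hσ : ∀ r, 0 ≤ σ r) (i : Fin M) :
    topShare M σ i ≤ minPref M σ i := by
  have : Nontrivial (Fin M) := Fin.nontrivial_iff_two_le.mpr hM
  obtain ⟨j, hji⟩ := exists_ne i
  refine le_csInf ⟨_, j, hji, rfl⟩ ?_
  rintro x ⟨j, hji, rfl⟩
  exact topShare_le_pref hσ hji

theorem sum_topShare (hM : 0 < M) : ∑ i, topShare M σ i = ∑ r, σ r := by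
  unfold topShare
  rw [sum_comm]
  refine sum_congr rfl fun r _ => ?_
  have htop : ∀ i, (r i : ℕ) = 0 ↔ i = r.symm ⟨0, hM⟩ := fun i => by
    rw [Equiv.eq_symm_apply, Fin.ext_iff]
  simp only [htop, sum_ite_eq', mem_univ, if_true]

theorem one_le_sum_minPref (hM : 2 ≤ M) (hσ : IsProfile M σ) :
    1 ≤ ∑ i, minPref M σ i :=
  calc (1 : ℝ) = ∑ i, topShare M σ i := by rw [sum_topShare (by omega), hσ.2]
    _ ≤ ∑ i, minPref M σ i := sum_le_sum fun i _ => topShare_le_minPref hM hσ.1 i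

end Profile

/-- the policy `π = Φ*(σ)` satisfies
`π(y_i) · Σ_j u_j ≥ w^σ_i`; equivalently, whenever `w^σ_i > 0`,
`π(y_i)/w^σ_i ≥ (Σ_j u_j)⁻¹`. -/
theorem phiStar_PPA_lower_bound
    (M : ℕ) (hM : 2 ≤ M) (σ : Equiv.Perm (Fin M) → ℝ) (hσ : IsProfile M σ)
    (i : Fin M) :
    topShare M σ i ≤ PhiStar M σ i * ∑ j, minPref M σ j ∧
    (0 < topShare M σ i →
      (∑ j, minPref M σ j)⁻¹ ≤ PhiStar M σ i / topShare M σ i) := by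
  have hsum : 0 < ∑ j, minPref M σ j := one_pos.trans_le (one_le_sum_minPref hM hσ)
  have hw := topShare_le_minPref hM hσ.1 i
  refine ⟨by rwa [PhiStar, div_mul_cancel₀ _ hsum.ne'], fun hwpos => ?_⟩
  rwa [PhiStar, div_div, le_div_iff₀ (by positivity), inv_mul_cancel_left₀ hsum.ne']
end
end

section
/- Let M = 2 and let Φ be any function from profiles over the two alternatives to probability distributions on {y_1, y_2} that is Condorcet consistent: whenever P^σ(y_i ≻ y_j) > 1/2 for i ≠ j, Φ(σ)(y_i) = 1. Then there exists a profile σ with w^σ_2 > 0 and Φ(σ)(y_2) = 0; hence no Condorcet-consistent rule can satisfy α-PPA with any positive α, i.e., Condorcet consistency and population-proportional alignment are incompatible. -/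
open Finset

noncomputable section

/-! If three quarters of the population rank `y₁` first, `y₁` is the Condorcet winner, so a
Condorcet-consistent rule gives `y₂` probability `0` although a quarter of the population ranks
`y₂` first; `α`-PPA would demand at least `α / 4`. -/

theorem Equiv.Perm.sum_fin_two {β : Type*} [AddCommMonoid β] (f : Equiv.Perm (Fin 2) → β) :
    ∑ r, f r = f 1 + f (Equiv.swap 0 1) := by
  have huniv : (univ : Finset (Equiv.Perm (Fin 2))) = {1, Equiv.swap 0 1} := by decide
  rw [huniv, sum_pair (by decide)]

/-- A share `p` of the population ranks `y₁ ≻ y₂` (the identity ranking), the rest `y₂ ≻ y₁`. -/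
def twoRankingProfile (p : ℝ) : Equiv.Perm (Fin 2) → ℝ :=
  fun r => if r = 1 then p else 1 - p

section twoRankingProfile

variable {p : ℝ}

theorem isProfile_twoRankingProfile (hp₀ : 0 ≤ p) (hp₁ : p ≤ 1) :
    IsProfile 2 (twoRankingProfile p) := by
  refine ⟨fun r => ?_, ?_⟩
  · unfold twoRankingProfile
    split_ifs <;> linarith
  · simp [Equiv.Perm.sum_fin_two, twoRankingProfile]

theorem pref_twoRankingProfile : Pref 2 (twoRankingProfile p) 0 1 = p := by
  simp [Pref, Equiv.Perm.sum_fin_two, twoRankingProfile]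

theorem topShare_twoRankingProfile : topShare 2 (twoRankingProfile p) 1 = 1 - p := by
  simp [topShare, Equiv.Perm.sum_fin_two, twoRankingProfile]

end twoRankingProfile

theorem eq_zero_of_condorcet_winner {Φ : (Equiv.Perm (Fin 2) → ℝ) → Fin 2 → ℝ}
    (hcc : ∀ σ, IsProfile 2 σ → ∀ i j : Fin 2, i ≠ j →
      1 / 2 < Pref 2 σ i j → Φ σ i = 1)
    {σ : Equiv.Perm (Fin 2) → ℝ} (hσ : IsProfile 2 σ) (hsum : ∑ i, Φ σ i = 1)
    (hwin : 1 / 2 < Pref 2 σ 0 1) : Φ σ 1 = 0 := by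
  have hwinner : Φ σ 0 = 1 := hcc σ hσ 0 1 (by decide) hwin
  rw [Fin.sum_univ_two] at hsum
  linarith

theorem not_forall_ppa_of_eq_zero {M : ℕ} {Φ : (Equiv.Perm (Fin M) → ℝ) → Fin M → ℝ}
    {σ : Equiv.Perm (Fin M) → ℝ} {i : Fin M} (hσ : IsProfile M σ)
    (hshare : 0 < topShare M σ i) (hzero : Φ σ i = 0) {α : ℝ} (hα : 0 < α) :
    ¬ ∀ σ, IsProfile M σ → ∀ i, α * topShare M σ i ≤ Φ σ i := by
  intro hppa
  have hbound := hppa σ hσ i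
  rw [hzero] at hbound
  exact (mul_pos hα hshare).not_ge hbound

/-- for `M = 2`, any Condorcet-consistent rule `Φ` (mapping
profiles to probability distributions) assigns probability `0` to `y_2` on
some profile with `w^σ_2 > 0`; hence it violates `α`-PPA for every `α > 0`:
Condorcet consistency and population-proportional alignment are incompatible. -/
theorem condorcet_incompatible_with_PPA
    (Φ : (Equiv.Perm (Fin 2) → ℝ) → Fin 2 → ℝ)
    (hdist : ∀ σ, IsProfile 2 σ → (∀ i, 0 ≤ Φ σ i) ∧ ∑ i, Φ σ i = 1)
    (hcc : ∀ σ, IsProfile 2 σ → ∀ i j : Fin 2, i ≠ j →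
      1 / 2 < Pref 2 σ i j → Φ σ i = 1) :
    (∃ σ, IsProfile 2 σ ∧ 0 < topShare 2 σ 1 ∧ Φ σ 1 = 0) ∧
    ∀ α : ℝ, 0 < α →
      ¬ ∀ σ, IsProfile 2 σ → ∀ i, α * topShare 2 σ i ≤ Φ σ i := by
  set σ := twoRankingProfile (3 / 4)
  have hσ : IsProfile 2 σ := isProfile_twoRankingProfile (by norm_num) (by norm_num)
  have hwin : 1 / 2 < Pref 2 σ 0 1 := by rw [pref_twoRankingProfile]; norm_num
  have hzero : Φ σ 1 = 0 := eq_zero_of_condorcet_winner hcc hσ (hdist σ hσ).2 hwin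
  have hshare : 0 < topShare 2 σ 1 := by rw [topShare_twoRankingProfile]; norm_num
  exact ⟨⟨σ, hσ, hshare, hzero⟩, fun α hα => not_forall_ppa_of_eq_zero hσ hshare hzero hα⟩
end
end

section
/- Let σ be a profile over rankings of M alternatives and suppose y_{i*} is a Condorcet winner, i.e., P^σ(y_{i*} ≻ y_j) > 1/2 for all j ≠ i*. Then u_{i*} > 1/2 and u_j < 1/2 for every j ≠ i*; in particular, i* is the unique maximizer of u over {1, …, M}, so the limiting policy Φ^∞, which places probability 1 on the alternative maximizing u, selects the Condorcet winner (Condorcet consistency of Φ^∞). -/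
open Finset

noncomputable section

/- The Condorcet winner beats every rival by a strict majority, so its worst pairwise score
exceeds `1/2`; every rival `j` loses to it, and since `P(j ≻ i*) = 1 - P(i* ≻ j)` for a ranking
profile, the worst pairwise score of `j` is below `1/2`. -/

section Pref

variable {M : ℕ} (σ : Equiv.Perm (Fin M) → ℝ)

theorem Pref_add_Pref_swap {i j : Fin M} (h : i ≠ j) :
    Pref M σ i j + Pref M σ j i = ∑ r, σ r := by
  rw [Pref, Pref, ← sum_add_distrib]
  refine sum_congr rfl fun r _ => ?_
  rcases (r.injective.ne h).lt_or_gt with hlt | hgt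
  · simp [hlt, hlt.not_gt]
  · simp [hgt, hgt.not_gt]

variable {σ} in
theorem Pref_swap (hσ : IsProfile M σ) {i j : Fin M} (h : i ≠ j) :
    Pref M σ j i = 1 - Pref M σ i j := by
  linarith [Pref_add_Pref_swap σ h, hσ.2]

theorem finite_setOf_Pref_ne (i : Fin M) : {x : ℝ | ∃ j, j ≠ i ∧ x = Pref M σ i j}.Finite :=
  (Set.finite_range (Pref M σ i)).subset fun _ ⟨j, _, hx⟩ => ⟨j, hx.symm⟩

theorem minPref_le_Pref {i j : Fin M} (hj : j ≠ i) : minPref M σ i ≤ Pref M σ i j :=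
  csInf_le (finite_setOf_Pref_ne σ i).bddBelow ⟨j, hj, rfl⟩

theorem lt_minPref_iff (hM : 2 ≤ M) (i : Fin M) {c : ℝ} :
    c < minPref M σ i ↔ ∀ j, j ≠ i → c < Pref M σ i j := by
  have : Nontrivial (Fin M) := Fin.nontrivial_iff_two_le.mpr hM
  obtain ⟨j, hj⟩ := exists_ne i
  rw [minPref, (finite_setOf_Pref_ne σ i).lt_csInf_iff ⟨_, j, hj, rfl⟩]
  constructor
  · exact fun h k hk => h _ ⟨k, hk, rfl⟩
  · rintro h _ ⟨k, hk, rfl⟩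
    exact h k hk

end Pref

/-- if `y_{i*}` is a Condorcet winner of `σ`, then
`u_{i*} > 1/2` and `u_j < 1/2` for `j ≠ i*`; in particular `i*` is the unique
maximizer of `u`, so the limiting policy `Φ^∞` selects the Condorcet winner. -/
theorem condorcet_winner_unique_u_maximizer
    (M : ℕ) (hM : 2 ≤ M) (σ : Equiv.Perm (Fin M) → ℝ) (hσ : IsProfile M σ)
    (istar : Fin M) (hcw : ∀ j, j ≠ istar → 1 / 2 < Pref M σ istar j) :
    1 / 2 < minPref M σ istar ∧
    (∀ j, j ≠ istar → minPref M σ j < 1 / 2) ∧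
    ∀ j, j ≠ istar → minPref M σ j < minPref M σ istar := by
  have hwinner : 1 / 2 < minPref M σ istar := (lt_minPref_iff σ hM istar).2 hcw
  have hloser : ∀ j, j ≠ istar → minPref M σ j < 1 / 2 := fun j hj => by
    have hle := minPref_le_Pref σ hj.symm
    rw [Pref_swap hσ hj.symm] at hle
    linarith [hcw j hj]
  exact ⟨hwinner, hloser, fun j hj => (hloser j hj).trans hwinner⟩
end
end
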